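/- Consider the kinetic finite-volume scheme for the multilayer Saint-Venant system with hydrostatic reconstruction: for cells indexed by i with topography values z_{b,i}, set z_{b,i+1/2} = max(z_{b,i}, z_{b,i+1}), H_{i+1/2−} = H_i + z_{b,i} − z_{b,i+1/2}, H_{i+1/2+} = H_{i+1} + z_{b,i+1} − z_{b,i+1/2}; the interface fluxes are F_{i+1/2} = F⁺(X_{i+1/2−}) + F⁻(X_{i+1/2+}), where X_{i+1/2−} = (H_{i+1/2−}, (u_{α,i})_α), X_{i+1/2+} = (H_{i+1/2+}, (u_{α,i+1})_α), and the kinetic fluxes have components F^±_{h_α}(H,(u)) = l_α H ∫_{±(u_α+wc)≥0,±} (u_α+wc)χ(w)dw and F^±_{q_α}(H,(u)) = l_α H ∫ (u_α+wc)²χ(w)dw over {w : u_α+wc ≥ 0} for F⁺ and {w : u_α+wc < 0} for F⁻, with c=√(gH/2); the update is H_i^{n+1} = H_i − σ_i(Σ_α F_{h_α,i+1/2} − Σ_α F_{h_α,i−1/2}) and q_{α,i}^{n+1} = l_α H_i u_{α,i} − σ_i(F_{q_α,i+1/2} − F_{q_α,i−1/2}) + σ_i·l_α(g/2)((H_{i+1/2−})²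 − (H_{i−1/2+})²). If the discrete state is a lake at rest, i.e. u_{α,i} = 0 for all α and i and H_i + z_{b,i} = C for a constant C with H_i ≥ 0 for all i, then the scheme leaves the state unchanged: H_i^{n+1} = H_i and q_{α,i}^{n+1} = 0 for all α, i. -/

import Mathlib

open MeasureTheory

/-- Positive-part kinetic mass flux `F⁺_{h_α}` of a state with water height `Hh`
and layer velocity `uα`, built from the Gibbs equilibrium with profile `χ`. -/
noncomputable def kineticFluxHPlus (g : ℝ) (χ : ℝ → ℝ) (lα Hh uα : ℝ) : ℝ :=
  lα * Hh * ∫ w in {w : ℝ | 0 ≤ uα + w * Real.sqrt (g * Hh / 2)},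
    (uα + w * Real.sqrt (g * Hh / 2)) * χ w

/-- Negative-part kinetic mass flux `F⁻_{h_α}`. -/
noncomputable def kineticFluxHMinus (g : ℝ) (χ : ℝ → ℝ) (lα Hh uα : ℝ) : ℝ :=
  lα * Hh * ∫ w in {w : ℝ | uα + w * Real.sqrt (g * Hh / 2) < 0},
    (uα + w * Real.sqrt (g * Hh / 2)) * χ w

/-- Positive-part kinetic momentum flux `F⁺_{q_α}`. -/
noncomputable def kineticFluxQPlus (g : ℝ) (χ : ℝ → ℝ) (lα Hh uα : ℝ) : ℝ :=
  lα * Hh * ∫ w in {w : ℝ | 0 ≤ uα + w * Real.sqrt (g * Hh / 2)},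
    (uα + w * Real.sqrt (g * Hh / 2)) ^ 2 * χ w

/-- Negative-part kinetic momentum flux `F⁻_{q_α}`. -/
noncomputable def kineticFluxQMinus (g : ℝ) (χ : ℝ → ℝ) (lα Hh uα : ℝ) : ℝ :=
  lα * Hh * ∫ w in {w : ℝ | uα + w * Real.sqrt (g * Hh / 2) < 0},
    (uα + w * Real.sqrt (g * Hh / 2)) ^ 2 * χ w

/-!
At rest the reconstructed heights on both sides of every interface coincide (both equal
`min H_i H_{i+1}`, since the free surface is flat), so each interface flux adds the halves
`{w c ≥ 0}` and `{w c < 0}` (with `c = √(gH/2)`) of one full moment of `χ`. For mass this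
is the first moment of the even profile `χ`, which vanishes; for momentum it is the second
moment, which equals the hydrostatic pressure `l_α g H²/2` and is cancelled exactly by the
pressure source term.
-/

theorem MeasureTheory.Integrable.pow_mul_of_hasCompactSupport {χ : ℝ → ℝ}
    (hχ : Integrable χ) (hχsupp : HasCompactSupport χ) (n : ℕ) :
    Integrable (fun w => w ^ n * χ w) := by
  have hK : IntegrableOn (fun w => w ^ n * χ w) (tsupport χ) :=
    hχ.integrableOn.continuousOn_mul (continuous_pow n).continuousOn hχsupp
  refine (integrableOn_iff_integrable_of_support_subset ?_).1 hK
  exact (Function.support_mul_subset_right _ _).trans (subset_tsupport χ)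

theorem integral_mul_eq_zero_of_even {χ : ℝ → ℝ} (hχeven : ∀ w, χ (-w) = χ w) :
    ∫ w, w * χ w = 0 := by
  have h := integral_neg_eq_self (fun w => w * χ w) volume
  simp only [hχeven, neg_mul, integral_neg] at h
  linarith

theorem setIntegral_nonneg_add_setIntegral_neg {f φ : ℝ → ℝ} (hf : Integrable f)
    (hφ : Measurable φ) :
    (∫ w in {w | 0 ≤ φ w}, f w) + (∫ w in {w | φ w < 0}, f w) = ∫ w, f w := by
  have hcompl : {w | φ w < 0} = {w | 0 ≤ φ w}ᶜ := by ext; simp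
  rw [hcompl]
  exact integral_add_compl (measurableSet_le measurable_const hφ) hf

theorem kineticFluxHPlus_add_kineticFluxHMinus_at_rest {g : ℝ} {χ : ℝ → ℝ}
    (hχ : Integrable χ) (hχsupp : HasCompactSupport χ) (hχeven : ∀ w, χ (-w) = χ w)
    (lα Hh : ℝ) :
    kineticFluxHPlus g χ lα Hh 0 + kineticFluxHMinus g χ lα Hh 0 = 0 := by
  set c := Real.sqrt (g * Hh / 2) with hc
  have hint : Integrable (fun w => w * c * χ w) :=
    ((hχ.pow_mul_of_hasCompactSupport hχsupp 1).const_mul c).congr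
      (.of_forall fun w => by simp only [pow_one]; ring)
  unfold kineticFluxHPlus kineticFluxHMinus
  simp only [zero_add, ← hc, ← mul_add]
  rw [setIntegral_nonneg_add_setIntegral_neg hint (continuous_mul_const c).measurable]
  have hfirst : ∫ w, w * c * χ w = c * ∫ w, w * χ w := by
    rw [← integral_const_mul]; congr 1; funext w; ring
  rw [hfirst, integral_mul_eq_zero_of_even hχeven]
  ring

theorem kineticFluxQPlus_add_kineticFluxQMinus_at_rest {g : ℝ} {χ : ℝ → ℝ}
    (hχ : Integrable χ) (hχsupp : HasCompactSupport χ) (hχ2 : ∫ w, w ^ 2 * χ w = 1)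
    (lα : ℝ) {Hh : ℝ} (hg : 0 ≤ g) (hHh : 0 ≤ Hh) :
    kineticFluxQPlus g χ lα Hh 0 + kineticFluxQMinus g χ lα Hh 0 = lα * (g / 2 * Hh ^ 2) := by
  set c := Real.sqrt (g * Hh / 2) with hc
  have hint : Integrable (fun w => (w * c) ^ 2 * χ w) :=
    ((hχ.pow_mul_of_hasCompactSupport hχsupp 2).const_mul (c ^ 2)).congr
      (.of_forall fun w => by ring)
  unfold kineticFluxQPlus kineticFluxQMinus
  simp only [zero_add, ← hc, ← mul_add]
  rw [setIntegral_nonneg_add_setIntegral_neg hint (continuous_mul_const c).measurable]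
  have hsecond : ∫ w, (w * c) ^ 2 * χ w = c ^ 2 * ∫ w, w ^ 2 * χ w := by
    rw [← integral_const_mul]; congr 1; funext w; ring
  rw [hsecond, hχ2, hc, Real.sq_sqrt (by positivity)]
  ring

theorem hydrostatic_height_eq_min {H₁ H₂ z₁ z₂ : ℝ} (hlevel : H₁ + z₁ = H₂ + z₂) :
    H₁ + z₁ - max z₁ z₂ = min H₁ H₂ := by
  rcases le_total z₁ z₂ with h | h
  · rw [max_eq_right h, min_eq_right (by linarith)]; linarith
  · rw [max_eq_left h, min_eq_left (by linarith)]; ring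

theorem multilayer_scheme_well_balanced_general
    (N : ℕ) (g : ℝ) (hg : 0 < g)
    (l : Fin N → ℝ) (σ : ℤ → ℝ)
    (χ : ℝ → ℝ) (hχint : Integrable χ) (hχsupp : HasCompactSupport χ)
    (hχeven : ∀ w, χ (-w) = χ w)
    (hχ2 : (∫ w, w ^ 2 * χ w) = 1)
    (zb H : ℤ → ℝ) (u : Fin N → ℤ → ℝ) (C : ℝ)
    (hrest : ∀ α i, u α i = 0)
    (hlake : ∀ i, H i + zb i = C)
    (hHpos : ∀ i, 0 ≤ H i)
    -- hydrostatic reconstruction at the interface i+1/2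
    (zbh Hm Hp : ℤ → ℝ)
    (hzbh : ∀ i, zbh i = max (zb i) (zb (i + 1)))
    (hHm : ∀ i, Hm i = H i + zb i - zbh i)
    (hHp : ∀ i, Hp i = H (i + 1) + zb (i + 1) - zbh i)
    -- numerical fluxes at the interface i+1/2
    (Fh Fq : Fin N → ℤ → ℝ)
    (hFh : ∀ α i, Fh α i =
      kineticFluxHPlus g χ (l α) (Hm i) (u α i)
        + kineticFluxHMinus g χ (l α) (Hp i) (u α (i + 1)))
    (hFq : ∀ α i, Fq α i =
      kineticFluxQPlus g χ (l α) (Hm i) (u α i)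
        + kineticFluxQMinus g χ (l α) (Hp i) (u α (i + 1)))
    -- updated state
    (Hnew : ℤ → ℝ) (qnew : Fin N → ℤ → ℝ)
    (hHnew : ∀ i, Hnew i =
      H i - σ i * ((∑ α, Fh α i) - ∑ α, Fh α (i - 1)))
    (hqnew : ∀ α i, qnew α i =
      l α * H i * u α i - σ i * (Fq α i - Fq α (i - 1))
        + σ i * (l α * (g / 2 * (Hm i) ^ 2 - g / 2 * (Hp (i - 1)) ^ 2))) :
    (∀ i, Hnew i = H i) ∧ (∀ α i, qnew α i = 0) := by
  have hHm_min : ∀ i, Hm i = min (H i) (H (i + 1)) := fun i => by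
    rw [hHm, hzbh, hydrostatic_height_eq_min (by rw [hlake, hlake])]
  have hHp_eq : ∀ i, Hp i = Hm i := fun i => by
    rw [hHp, hzbh, max_comm, hydrostatic_height_eq_min (by rw [hlake, hlake]), min_comm,
      hHm_min]
  have hHm_nonneg : ∀ i, 0 ≤ Hm i := fun i => by
    rw [hHm_min]; exact le_min (hHpos i) (hHpos (i + 1))
  have hFh_zero : ∀ α i, Fh α i = 0 := fun α i => by
    rw [hFh, hrest, hrest, hHp_eq]
    exact kineticFluxHPlus_add_kineticFluxHMinus_at_rest hχint hχsupp hχeven _ _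
  have hFq_pressure : ∀ α i, Fq α i = l α * (g / 2 * Hm i ^ 2) := fun α i => by
    rw [hFq, hrest, hrest, hHp_eq]
    exact kineticFluxQPlus_add_kineticFluxQMinus_at_rest hχint hχsupp hχ2 _ hg.le (hHm_nonneg i)
  refine ⟨fun i => by simp [hHnew, hFh_zero], fun α i => ?_⟩
  rw [hqnew, hrest, hFq_pressure, hFq_pressure, hHp_eq]
  ring

/-- The kinetic finite-volume scheme for the multilayer Saint-Venant system
with hydrostatic reconstruction preserves the lake-at-rest steady states:
if `u_{α,i} = 0` and `H_i + z_{b,i} = C` with `H_i ≥ 0` for all cells `i`,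
then the updated state is unchanged. -/
theorem multilayer_scheme_well_balanced
    (N : ℕ) (hN : 1 ≤ N) (g : ℝ) (hg : 0 < g)
    (l : Fin N → ℝ) (hl : ∀ α, 0 < l α) (hlsum : ∑ α, l α = 1)
    (σ : ℤ → ℝ) (hσ : ∀ i, 0 < σ i)
    (χ : ℝ → ℝ) (hχint : Integrable χ) (hχsupp : HasCompactSupport χ)
    (hχeven : ∀ w, χ (-w) = χ w) (hχpos : ∀ w, 0 ≤ χ w)
    (hχ0 : (∫ w, χ w) = 1) (hχ2 : (∫ w, w ^ 2 * χ w) = 1)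
    (zb H : ℤ → ℝ) (u : Fin N → ℤ → ℝ) (C : ℝ)
    (hrest : ∀ α i, u α i = 0)
    (hlake : ∀ i, H i + zb i = C)
    (hHpos : ∀ i, 0 ≤ H i)
    -- hydrostatic reconstruction at the interface i+1/2
    (zbh Hm Hp : ℤ → ℝ)
    (hzbh : ∀ i, zbh i = max (zb i) (zb (i + 1)))
    (hHm : ∀ i, Hm i = H i + zb i - zbh i)
    (hHp : ∀ i, Hp i = H (i + 1) + zb (i + 1) - zbh i)
    -- numerical fluxes at the interface i+1/2
    (Fh Fq : Fin N → ℤ → ℝ)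
    (hFh : ∀ α i, Fh α i =
      kineticFluxHPlus g χ (l α) (Hm i) (u α i)
        + kineticFluxHMinus g χ (l α) (Hp i) (u α (i + 1)))
    (hFq : ∀ α i, Fq α i =
      kineticFluxQPlus g χ (l α) (Hm i) (u α i)
        + kineticFluxQMinus g χ (l α) (Hp i) (u α (i + 1)))
    -- updated state
    (Hnew : ℤ → ℝ) (qnew : Fin N → ℤ → ℝ)
    (hHnew : ∀ i, Hnew i =
      H i - σ i * ((∑ α, Fh α i) - ∑ α, Fh α (i - 1)))
    (hqnew : ∀ α i, qnew α i =
      l α * H i * u α i - σ i * (Fq α i - Fq α (i - 1))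
        + σ i * (l α * (g / 2 * (Hm i) ^ 2 - g / 2 * (Hp (i - 1)) ^ 2))) :
    (∀ i, Hnew i = H i) ∧ (∀ α i, qnew α i = 0) :=
  multilayer_scheme_well_balanced_general N g hg l σ χ hχint hχsupp hχeven hχ2 zb H u C hrest hlake
    hHpos zbh Hm Hp hzbh hHm hHp Fh Fq hFh hFq Hnew qnew hHnew hqnew
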